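/- arXiv:1305.4892 — 2 statements merged into one kernel-verified Lean document; each statement's English description precedes it below -/
import Mathlib

section
/- Let s ≥ 3, n ≥ 0 and let X, Y be level-n configurations with card X = card Y. Then for every integer z, the number of level-(n+1) configurations Z with card Z = z and πZ = X equals the number of level-(n+1) configurations Z with card Z = z and πZ = Y; that is, c_n(s, X, z) = c_n(s, Y, z). -/
/-- `s' = ⌈(s+1)/2⌉`, the strict-majority threshold for group size `s`. -/
def sPrime (s : ℕ) : ℕ := (s + 2) / 2

/-- Number of entries equal to `+1` (encoded as `true`) in a configuration. -/
def cfgCard {m : ℕ} (X : Fin m → Bool) : ℕ :=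
  (Finset.univ.filter fun i => X i = true).card

/-- The one-step induction map `π` sending a level-`(n+1)` configuration to a
level-`n` configuration by the majority rule with ties resolved in favor of `-1`. -/
def piMap (s n : ℕ) (Z : Fin (s ^ (n + 1)) → Bool) : Fin (s ^ n) → Bool :=
  fun i => decide (sPrime s ≤ (Finset.univ.filter fun j : Fin s =>
    Z ⟨s * (i : ℕ) + (j : ℕ), by
      have h1 : (i : ℕ) + 1 ≤ s ^ n := i.isLt
      have h2 : (j : ℕ) < s := j.isLt
      have h3 : s * ((i : ℕ) + 1) ≤ s * s ^ n := Nat.mul_le_mul_left _ h1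
      have h4 : s * ((i : ℕ) + 1) = s * (i : ℕ) + s := by ring
      have h5 : s ^ (n + 1) = s * s ^ n := by rw [pow_succ, Nat.mul_comm]
      omega⟩ = true).card)

/-- `c_n(s, X, z)`: the number of level-`(n+1)` configurations `Z` with
`card Z = z` and `πZ = X`. -/
def cCount (s n : ℕ) (X : Fin (s ^ n) → Bool) (z : ℕ) : ℕ :=
  (Finset.univ.filter fun Z : Fin (s ^ (n + 1)) → Bool =>
    cfgCard Z = z ∧ piMap s n Z = X).card

/-!
Configurations of equal cardinality differ by a permutation `σ` of positions. Permuting the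
level-`(n+1)` positions block by block along `σ` preserves `card` and intertwines `π` with `σ`,
so it is a bijection between the two sets counted by `c_n`.
-/

lemma cfgCard_comp_perm {m : ℕ} (Z : Fin m → Bool) (e : Equiv.Perm (Fin m)) :
    cfgCard (Z ∘ e) = cfgCard Z :=
  Finset.card_equiv e (by simp)

lemma card_fiber_eq_of_cfgCard_eq {m : ℕ} {X Y : Fin m → Bool} (h : cfgCard X = cfgCard Y)
    (c : Bool) : Fintype.card {i // X i = c} = Fintype.card {i // Y i = c} := by
  have htrue : Fintype.card {i // X i = true} = Fintype.card {i // Y i = true} := by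
    simpa only [cfgCard, Fintype.card_subtype] using h
  cases c
  · simp only [Bool.eq_false_iff, ne_eq]
    rw [Fintype.card_subtype_compl, Fintype.card_subtype_compl, htrue]
  · exact htrue

lemma exists_perm_comp_eq_of_cfgCard_eq {m : ℕ} {X Y : Fin m → Bool}
    (h : cfgCard X = cfgCard Y) : ∃ σ : Equiv.Perm (Fin m), Y ∘ σ = X :=
  ⟨Equiv.ofFiberEquiv fun c => Fintype.equivOfCardEq (card_fiber_eq_of_cfgCard_eq h c),
    funext (Equiv.ofFiberEquiv_map _)⟩

def blockEquiv (s n : ℕ) : Fin (s ^ n) × Fin s ≃ Fin (s ^ (n + 1)) :=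
  finProdFinEquiv.trans (finCongr (pow_succ s n).symm)

@[simp]
lemma blockEquiv_apply_val (s n : ℕ) (i : Fin (s ^ n)) (j : Fin s) :
    (blockEquiv s n (i, j) : ℕ) = s * i + j := by
  simp [blockEquiv, finProdFinEquiv, add_comm]

lemma piMap_apply (s n : ℕ) (Z : Fin (s ^ (n + 1)) → Bool) (i : Fin (s ^ n)) :
    piMap s n Z i =
      decide (sPrime s ≤ (Finset.univ.filter fun j => Z (blockEquiv s n (i, j)) = true).card) := by
  have hidx : ∀ j : Fin s,
      blockEquiv s n (i, j) = ⟨s * i + j, by simp [← blockEquiv_apply_val]⟩ :=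
    fun j => Fin.ext (blockEquiv_apply_val s n i j)
  simp only [piMap, hidx]

def blockPerm (s n : ℕ) (σ : Equiv.Perm (Fin (s ^ n))) : Equiv.Perm (Fin (s ^ (n + 1))) :=
  (blockEquiv s n).permCongr (σ.prodCongr (Equiv.refl _))

lemma blockPerm_blockEquiv (s n : ℕ) (σ : Equiv.Perm (Fin (s ^ n))) (i : Fin (s ^ n))
    (j : Fin s) : blockPerm s n σ (blockEquiv s n (i, j)) = blockEquiv s n (σ i, j) := by
  simp [blockPerm, Equiv.permCongr_apply]

lemma piMap_comp_blockPerm (s n : ℕ) (σ : Equiv.Perm (Fin (s ^ n)))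
    (Z : Fin (s ^ (n + 1)) → Bool) : piMap s n (Z ∘ blockPerm s n σ) = piMap s n Z ∘ σ := by
  funext i
  simp only [piMap_apply, Function.comp_apply, blockPerm_blockEquiv]

lemma cCount_comp_perm (s n : ℕ) (X : Fin (s ^ n) → Bool) (σ : Equiv.Perm (Fin (s ^ n)))
    (z : ℕ) : cCount s n (X ∘ σ) z = cCount s n X z := by
  let e := (blockPerm s n σ).symm.arrowCongr (Equiv.refl Bool)
  have he : ∀ Z, e Z = Z ∘ blockPerm s n σ := fun _ => rfl
  refine (Finset.card_equiv e fun Z => ?_).symm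
  simp only [Finset.mem_filter, Finset.mem_univ, true_and, he, cfgCard_comp_perm,
    piMap_comp_blockPerm, σ.surjective.injective_comp_right.eq_iff]

theorem cCount_eq_of_card_eq_general (s n : ℕ)
    (X Y : Fin (s ^ n) → Bool) (h : cfgCard X = cfgCard Y) (z : ℕ) :
    cCount s n X z = cCount s n Y z := by
  obtain ⟨σ, rfl⟩ := exists_perm_comp_eq_of_cfgCard_eq h
  exact cCount_comp_perm s n Y σ z

/-- `c_n(s, X, z)` depends on `X` only through `card X`. -/
theorem cCount_eq_of_card_eq (s n : ℕ) (hs : 3 ≤ s)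
    (X Y : Fin (s ^ n) → Bool) (h : cfgCard X = cfgCard Y) (z : ℕ) :
    cCount s n X z = cCount s n Y z :=
  cCount_eq_of_card_eq_general s n X Y h z
end

section
/- For every ε > 0 there exist a₀ > 0 and N₀ ∈ ℕ such that for all N ≥ N₀: (i) for every integer x with 0 < x < (c₊ − ε)N, q₁(x)(e^{a₀} − 1) + q₋₁(x)(e^{−a₀} − 1) + q₋₂(x)(e^{−2a₀} − 1) ≤ 0; and (ii) for every integer x with (c₊ + ε)N < x < N, q₁(x)(e^{−a₀} − 1) + q₋₁(x)(e^{a₀} − 1) + q₋₂(x)(e^{2a₀} − 1) ≤ 0. In words, exp(a₀·state) is a supermartingale for the public debate chain on the region below (c₊ − ε)N, and exp(−a₀·state) is a supermartingale on the region above (c₊ + ε)N. -/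
/-- `q₁(x) = C(x,3)·(N−x)/C(N,4)`: probability of a `+1` jump in the size-4
public debate model with population `N`. -/
noncomputable def q1 (N x : ℕ) : ℝ :=
  (x.choose 3 : ℝ) * ((N - x : ℕ) : ℝ) / (N.choose 4 : ℝ)

/-- `q₋₁(x) = x·C(N−x,3)/C(N,4)`: probability of a `−1` jump in the size-4
public debate model with population `N`. -/
noncomputable def qm1 (N x : ℕ) : ℝ :=
  (x : ℝ) * ((N - x).choose 3 : ℝ) / (N.choose 4 : ℝ)

/-- `q₋₂(x) = C(x,2)·C(N−x,2)/C(N,4)`: probability of a `−2` jump in the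
size-4 public debate model with population `N`. -/
noncomputable def qm2 (N x : ℕ) : ℝ :=
  (x.choose 2 : ℝ) * ((N - x).choose 2 : ℝ) / (N.choose 4 : ℝ)

lemma cast_choose_three (n : ℕ) : ((n.choose 3 : ℕ) : ℝ) = n*(n-1)*(n-2)/6 := by
  induction n with
  | zero => simp
  | succ m ih =>
    rw [Nat.choose_succ_succ m 2]
    push_cast [ih, Nat.cast_choose_two ℝ m]
    ring

lemma exp_le_quad (a : ℝ) (h0 : 0 ≤ a) (h1 : a ≤ 1/2) : Real.exp a ≤ 1 + a + 2*a^2 := by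
  have h2 : 1 - a ≤ Real.exp (-a) := by have := Real.add_one_le_exp (-a); linarith
  have hmul : Real.exp a * Real.exp (-a) = 1 := by rw [← Real.exp_add]; simp
  have hea := Real.exp_pos a
  nlinarith [mul_le_mul_of_nonneg_left h2 hea.le, sq_nonneg a, mul_nonneg (mul_nonneg h0 h0) h0]

lemma exp_neg_le_quad (a : ℝ) (h0 : 0 ≤ a) : Real.exp (-a) ≤ 1 - a + a^2 := by
  have h2 : 1 + a ≤ Real.exp a := by have := Real.add_one_le_exp a; linarith
  have hmul : Real.exp a * Real.exp (-a) = 1 := by rw [← Real.exp_add]; simp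
  have hea := Real.exp_pos (-a)
  nlinarith [mul_le_mul_of_nonneg_left h2 hea.le, mul_nonneg (mul_nonneg h0 h0) h0]

lemma numer_nonpos1 (δ A B C : ℝ) (hδ0 : 0 < δ) (hδ1 : δ ≤ 1/4)
    (hA : 0 ≤ A) (hB : 0 ≤ B) (hC : 0 ≤ C)
    (key : (1+δ)*A ≤ (1-δ)*(B + 2*C)) :
    A*(Real.exp (δ/4) - 1) + B*(Real.exp (-(δ/4)) - 1) + C*(Real.exp (-2*(δ/4)) - 1) ≤ 0 := by
  have ha0 : (0:ℝ) ≤ δ/4 := by linarith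
  have e1 := exp_le_quad (δ/4) ha0 (by linarith)
  have e2 := exp_neg_le_quad (δ/4) ha0
  have e3 := exp_neg_le_quad (δ/2) (by linarith)
  have h3 : Real.exp (-2*(δ/4)) = Real.exp (-(δ/2)) := by congr 1; ring
  rw [h3]
  nlinarith [mul_le_mul_of_nonneg_left e1 hA, mul_le_mul_of_nonneg_left e2 hB,
    mul_le_mul_of_nonneg_left e3 hC, mul_nonneg hB hδ0.le, mul_nonneg hC hδ0.le,
    mul_nonneg (mul_nonneg hB hδ0.le) hδ0.le, mul_nonneg (mul_nonneg hC hδ0.le) hδ0.le,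
    mul_nonneg (mul_nonneg hA hδ0.le) hδ0.le, mul_le_mul_of_nonneg_right key hδ0.le]

lemma numer_nonpos2 (δ A B C : ℝ) (hδ0 : 0 < δ) (hδ1 : δ ≤ 1/4)
    (hA : 0 ≤ A) (hB : 0 ≤ B) (hC : 0 ≤ C)
    (key : (1+δ)*(B + 2*C) ≤ (1-δ)*A) :
    A*(Real.exp (-(δ/4)) - 1) + B*(Real.exp (δ/4) - 1) + C*(Real.exp (2*(δ/4)) - 1) ≤ 0 := by
  have ha0 : (0:ℝ) ≤ δ/4 := by linarith
  have e1 := exp_neg_le_quad (δ/4) ha0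
  have e2 := exp_le_quad (δ/4) ha0 (by linarith)
  have e3 := exp_le_quad (δ/2) (by linarith) (by linarith)
  have h3 : Real.exp (2*(δ/4)) = Real.exp (δ/2) := by congr 1; ring
  rw [h3]
  nlinarith [mul_le_mul_of_nonneg_left e1 hA, mul_le_mul_of_nonneg_left e2 hB,
    mul_le_mul_of_nonneg_left e3 hC, mul_nonneg hB hδ0.le, mul_nonneg hC hδ0.le,
    mul_nonneg (mul_nonneg hB hδ0.le) hδ0.le, mul_nonneg (mul_nonneg hC hδ0.le) hδ0.le,
    mul_nonneg (mul_nonneg hA hδ0.le) hδ0.le, mul_le_mul_of_nonneg_right key hδ0.le]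

lemma key1 (ε δ s X N : ℝ) (hε : 0 < ε) (hs2 : s^2 = 13) (hs3 : 3 ≤ s)
    (hδ0 : 0 < δ) (hδε : 4*δ ≤ ε) (hδ1 : 4*δ ≤ 1)
    (hX1 : 1 ≤ X) (hY1 : 1 ≤ N - X) (hN : 3 ≤ δ*N)
    (hxlt : X < ((1+s)/6 - ε)*N) :
    (1+δ)*((X-1)*(X-2)) ≤ (1-δ)*((N-X-1)*(N-X-2) + 3*(X-1)*(N-X-1)) := by
  have hN0 : 0 < N := by linarith
  have hεN : 12 ≤ ε*N := by nlinarith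
  have hc1 : ε*N ≤ ((1+s)/6)*N - X := by nlinarith
  have hc2 : (s-1)/6*N ≤ X - ((1-s)/6)*N := by nlinarith
  have hc2' : 0 ≤ (s-1)/6*N := by nlinarith
  have hc1' : 0 ≤ ((1+s)/6)*N - X := by nlinarith
  have hprod : (ε*N) * ((s-1)/6*N) ≤ (((1+s)/6)*N - X) * (X - ((1-s)/6)*N) :=
    mul_le_mul hc1 hc2 hc2' hc1'
  have hXY : X*(N-X) ≤ N^2/4 := by nlinarith [sq_nonneg (2*X-N)]
  have hδXY : δ*(X*(N-X)) ≤ δ*(N^2/4) := mul_le_mul_of_nonneg_left hXY hδ0.le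
  have hδN2 : δ*N^2 ≤ (ε/4)*N^2 := by nlinarith [sq_nonneg N]
  have hP : ε*N^2 ≤ 3*((((1+s)/6)*N - X) * (X - ((1-s)/6)*N)) := by
    nlinarith [mul_nonneg (mul_nonneg hε.le hN0.le) hN0.le]
  nlinarith [hP, hδXY, hδN2, hεN, hs2, mul_nonneg hδ0.le hN0.le]

lemma key2 (ε δ s X N : ℝ) (hε : 0 < ε) (hs2 : s^2 = 13) (hs3 : 3 ≤ s)
    (hδ0 : 0 < δ) (hδε : 4*δ ≤ ε) (hδ1 : 4*δ ≤ 1)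
    (hX1 : 1 ≤ X) (hY1 : 1 ≤ N - X)
    (hxgt : ((1+s)/6 + ε)*N < X) :
    (1+δ)*((N-X-1)*(N-X-2) + 3*(X-1)*(N-X-1)) ≤ (1-δ)*((X-1)*(X-2)) := by
  have hN0 : 0 < N := by linarith
  have hc1 : ε*N ≤ X - ((1+s)/6)*N := by nlinarith
  have hc2 : (s-1)/6*N ≤ X - ((1-s)/6)*N := by nlinarith
  have hc2' : 0 ≤ (s-1)/6*N := by nlinarith
  have hc1' : 0 ≤ X - ((1+s)/6)*N := by nlinarith
  have hprod : (ε*N) * ((s-1)/6*N) ≤ (X - ((1+s)/6)*N) * (X - ((1-s)/6)*N) :=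
    mul_le_mul hc1 hc2 hc2' hc1'
  have hXY : X*(N-X) ≤ N^2/4 := by nlinarith [sq_nonneg (2*X-N)]
  have hδXY : δ*(X*(N-X)) ≤ δ*(N^2/4) := mul_le_mul_of_nonneg_left hXY hδ0.le
  have hδN2 : δ*N^2 ≤ (ε/4)*N^2 := by nlinarith [sq_nonneg N]
  have hP : ε*N^2 ≤ 3*((X - ((1+s)/6)*N) * (X - ((1-s)/6)*N)) := by
    nlinarith [mul_nonneg (mul_nonneg hε.le hN0.le) hN0.le]
  nlinarith [hP, hδXY, hδN2, hs2, mul_nonneg hδ0.le hN0.le]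

/-- Lemma (exponential supermartingales): for every `ε > 0` there is `a₀ > 0`
such that, for all large `N`, `exp(a₀·state)` is a supermartingale for the
size-4 public debate chain on `(0, (c₊−ε)N)` and `exp(−a₀·state)` is a
supermartingale on `((c₊+ε)N, N)`, where `c₊ = (1+√13)/6`. -/
theorem exp_supermartingale (ε : ℝ) (hε : 0 < ε) :
    ∃ a₀ > 0, ∃ N₀ : ℕ, ∀ N ≥ N₀,
      (∀ x : ℕ, 0 < x → (x : ℝ) < ((1 + Real.sqrt 13) / 6 - ε) * N →
        q1 N x * (Real.exp a₀ - 1) + qm1 N x * (Real.exp (-a₀) - 1)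
          + qm2 N x * (Real.exp (-2 * a₀) - 1) ≤ 0)
      ∧ (∀ x : ℕ, ((1 + Real.sqrt 13) / 6 + ε) * N < (x : ℝ) → x < N →
        q1 N x * (Real.exp (-a₀) - 1) + qm1 N x * (Real.exp a₀ - 1)
          + qm2 N x * (Real.exp (2 * a₀) - 1) ≤ 0) := by
  have hs2 : Real.sqrt 13 ^ 2 = 13 := Real.sq_sqrt (by norm_num)
  have hs0 := Real.sqrt_nonneg 13
  have hs3 : 3 ≤ Real.sqrt 13 := by nlinarith
  have hs4 : Real.sqrt 13 ≤ 4 := by nlinarith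
  set s := Real.sqrt 13 with hsdef
  set δ : ℝ := min ε 1 / 4 with hδdef
  have hδ0 : 0 < δ := div_pos (lt_min hε one_pos) (by norm_num)
  have hδε : 4*δ ≤ ε := by
    have := min_le_left ε 1
    rw [hδdef]; linarith
  have hδ1 : 4*δ ≤ 1 := by
    have := min_le_right ε 1
    rw [hδdef]; linarith
  refine ⟨δ/4, by positivity, ⌈(3:ℝ)/δ⌉₊ + 4, ?_⟩
  intro N hN
  have hN4 : 4 ≤ N := by omega
  have hDnat : 0 < N.choose 4 := Nat.choose_pos hN4
  have hD : (0:ℝ) < (N.choose 4 : ℝ) := by exact_mod_cast hDnat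
  have hceil : (⌈(3:ℝ)/δ⌉₊ : ℝ) ≤ N := by
    have : ⌈(3:ℝ)/δ⌉₊ ≤ N := by omega
    exact_mod_cast this
  have hδN : 3 ≤ δ*(N:ℝ) := by
    have h := le_trans (Nat.le_ceil ((3:ℝ)/δ)) hceil
    rw [div_le_iff₀ hδ0] at h
    linarith [mul_comm δ (N:ℝ)]
  constructor
  · intro x hx0 hxlt
    have hNR : (0:ℝ) ≤ N := Nat.cast_nonneg N
    have hsX : (x:ℝ) < N := by nlinarith
    have hxN : x < N := by exact_mod_cast hsX
    have hX1 : (1:ℝ) ≤ x := by exact_mod_cast hx0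
    have hY1 : (1:ℝ) ≤ (N:ℝ) - x := by
      have : (x:ℝ) + 1 ≤ N := by exact_mod_cast hxN
      linarith
    have hYc : ((N-x:ℕ):ℝ) = (N:ℝ) - x := by
      rw [Nat.cast_sub hxN.le]
    have h2 := key1 ε δ s (x:ℝ) (N:ℝ) hε hs2 hs3 hδ0 hδε hδ1 hX1 hY1 hδN hxlt
    have hc : (0:ℝ) ≤ (x:ℝ)*((N:ℝ)-x)/6 :=
      div_nonneg (mul_nonneg (by linarith) (by linarith)) (by norm_num)
    have key : (1+δ)*((x.choose 3:ℝ) * ((N-x:ℕ):ℝ)) ≤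
        (1-δ)*((x:ℝ)*(((N-x).choose 3:ℝ)) + 2*((x.choose 2:ℝ)*(((N-x).choose 2:ℝ)))) := by
      rw [cast_choose_three, cast_choose_three, Nat.cast_choose_two ℝ, Nat.cast_choose_two ℝ, hYc]
      linarith [mul_le_mul_of_nonneg_left h2 hc]
    have hA : (0:ℝ) ≤ (x.choose 3:ℝ) * ((N-x:ℕ):ℝ) := by positivity
    have hB : (0:ℝ) ≤ (x:ℝ)*(((N-x).choose 3:ℝ)) := by positivity
    have hC : (0:ℝ) ≤ (x.choose 2:ℝ)*(((N-x).choose 2:ℝ)) := by positivity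
    have hnum := numer_nonpos1 δ _ _ _ hδ0 (by linarith) hA hB hC key
    have hgoal : q1 N x * (Real.exp (δ/4) - 1) + qm1 N x * (Real.exp (-(δ/4)) - 1)
        + qm2 N x * (Real.exp (-2*(δ/4)) - 1)
        = ((x.choose 3:ℝ) * ((N-x:ℕ):ℝ) * (Real.exp (δ/4) - 1)
          + (x:ℝ)*(((N-x).choose 3:ℝ)) * (Real.exp (-(δ/4)) - 1)
          + (x.choose 2:ℝ)*(((N-x).choose 2:ℝ)) * (Real.exp (-2*(δ/4)) - 1)) / (N.choose 4:ℝ) := by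
      unfold q1 qm1 qm2; ring
    rw [hgoal]
    exact div_nonpos_of_nonpos_of_nonneg hnum hD.le
  · intro x hxgt hxN
    have hNR : (0:ℝ) ≤ N := Nat.cast_nonneg N
    have hX0 : (0:ℝ) < x := by nlinarith
    have hx0 : 0 < x := by exact_mod_cast hX0
    have hX1 : (1:ℝ) ≤ x := by exact_mod_cast hx0
    have hY1 : (1:ℝ) ≤ (N:ℝ) - x := by
      have : (x:ℝ) + 1 ≤ N := by exact_mod_cast hxN
      linarith
    have hYc : ((N-x:ℕ):ℝ) = (N:ℝ) - x := by
      rw [Nat.cast_sub hxN.le]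
    have h2 := key2 ε δ s (x:ℝ) (N:ℝ) hε hs2 hs3 hδ0 hδε hδ1 hX1 hY1 hxgt
    have hc : (0:ℝ) ≤ (x:ℝ)*((N:ℝ)-x)/6 :=
      div_nonneg (mul_nonneg (by linarith) (by linarith)) (by norm_num)
    have key : (1+δ)*((x:ℝ)*(((N-x).choose 3:ℝ)) + 2*((x.choose 2:ℝ)*(((N-x).choose 2:ℝ)))) ≤
        (1-δ)*((x.choose 3:ℝ) * ((N-x:ℕ):ℝ)) := by
      rw [cast_choose_three, cast_choose_three, Nat.cast_choose_two ℝ, Nat.cast_choose_two ℝ, hYc]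
      linarith [mul_le_mul_of_nonneg_left h2 hc]
    have hA : (0:ℝ) ≤ (x.choose 3:ℝ) * ((N-x:ℕ):ℝ) := by positivity
    have hB : (0:ℝ) ≤ (x:ℝ)*(((N-x).choose 3:ℝ)) := by positivity
    have hC : (0:ℝ) ≤ (x.choose 2:ℝ)*(((N-x).choose 2:ℝ)) := by positivity
    have hnum := numer_nonpos2 δ _ _ _ hδ0 (by linarith) hA hB hC key
    have hgoal : q1 N x * (Real.exp (-(δ/4)) - 1) + qm1 N x * (Real.exp (δ/4) - 1)
        + qm2 N x * (Real.exp (2*(δ/4)) - 1)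
        = ((x.choose 3:ℝ) * ((N-x:ℕ):ℝ) * (Real.exp (-(δ/4)) - 1)
          + (x:ℝ)*(((N-x).choose 3:ℝ)) * (Real.exp (δ/4) - 1)
          + (x.choose 2:ℝ)*(((N-x).choose 2:ℝ)) * (Real.exp (2*(δ/4)) - 1)) / (N.choose 4:ℝ) := by
      unfold q1 qm1 qm2; ring
    rw [hgoal]
    exact div_nonpos_of_nonpos_of_nonneg hnum hD.le
end
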